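/- arXiv:1004.3755 — 2 statements merged into one kernel-verified Lean document; each statement's English description precedes it below -/
import Mathlib

section
/- Let A be an (N+1)×N complex matrix such that every set of N rows of A is linearly independent. Then the N(N+1)×N(N+1) block matrix = [ (I_N ⊗ A) | D(A)_{:,2..N+1} ], where D(A) is the N(N+1)×(N+1) matrix obtained by stacking the diagonal matrices diag(column-wise slices of A) (i.e., D(A) = [diag(A_{1,1},…,A_{N+1,1}); …; diag(A_{1,N},…,A_{N+1,N})]) and D(A)_{:,2..N+1} keeps columns 2 through N+1, has full rank N(N+1). -/
open Matrix Kronecker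

/-- The stacking operator `D`: for `A ∈ ℂ^{M×N}`, `D(A) ∈ ℂ^{MN×M}` is the vertical
stack of the diagonal matrices `diag(A_{1,j},…,A_{M,j})` for `j = 1,…,N`.
Row index `(j, i)` is row `i` of the `j`-th diagonal block. -/
def Dstack {M N : ℕ} (A : Matrix (Fin M) (Fin N) ℂ) :
    Matrix (Fin N × Fin M) (Fin M) ℂ :=
  fun p k => if p.2 = k then A p.2 p.1 else 0

lemma rows_li_aux {N : ℕ} (A : Matrix (Fin (N + 1)) (Fin N) ℂ)
    (hA : ∀ i : Fin (N + 1), IsUnit (A.submatrix i.succAbove id))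
    (S : Finset (Fin (N + 1))) (hS : S.card ≤ N) :
    LinearIndependent ℂ (fun i : S => A i) := by
  classical
  obtain ⟨i₀, hi₀⟩ : ∃ i₀, i₀ ∉ S := by
    by_contra h
    push_neg at h
    have : S = Finset.univ := Finset.eq_univ_iff_forall.mpr h
    simp [this] at hS
  have li : LinearIndependent ℂ (fun k : Fin N => A (i₀.succAbove k)) := by
    have := Matrix.linearIndependent_rows_iff_isUnit.mpr (hA i₀)
    exact this
  have hg : ∀ i : S, ∃ k : Fin N, i₀.succAbove k = (i : Fin (N + 1)) := by
    intro i
    exact Fin.exists_succAbove_eq (by rintro rfl; exact hi₀ i.2)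
  choose g hgspec using hg
  have hginj : Function.Injective g := by
    intro a b hab
    have : (a : Fin (N + 1)) = b := by rw [← hgspec a, ← hgspec b, hab]
    exact Subtype.ext this
  have := li.comp g hginj
  convert this using 1
  funext i
  simp [Function.comp, hgspec i]

open Module Submodule in
/-- Lemma 3 of the paper: if any `N` rows of the `(N+1)×N` matrix `A` are linearly
independent (i.e., deleting any single row leaves an invertible `N×N` matrix), then
the `N(N+1)×N(N+1)` matrix `Â = [ I_N ⊗ A | D(A)_{:,2..N+1} ]` has full rank. -/
theorem stmt0 (N : ℕ) (A : Matrix (Fin (N + 1)) (Fin N) ℂ)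
    (hA : ∀ i : Fin (N + 1), IsUnit (A.submatrix i.succAbove id)) :
    (Matrix.fromCols
        ((1 : Matrix (Fin N) (Fin N) ℂ) ⊗ₖ A)
        (fun p (k : Fin N) => Dstack A p k.succ)).rank = N * (N + 1) := by
  classical
  set M := Matrix.fromCols ((1 : Matrix (Fin N) (Fin N) ℂ) ⊗ₖ A)
      (fun p (k : Fin N) => Dstack A p k.succ) with hMdef
  -- A has injective mulVec
  have hAinj : ∀ c : Fin N → ℂ, A *ᵥ c = 0 → c = 0 := by
    intro c hc
    have h2 : (A.submatrix (Fin.succAbove 0) id) *ᵥ c = 0 := by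
      funext k
      have := congrFun hc (Fin.succAbove 0 k)
      simpa [Matrix.mulVec, dotProduct, Matrix.submatrix] using this
    have := Matrix.mulVec_injective_iff_isUnit.mpr (hA 0) (a₁ := c) (a₂ := 0)
    simp only [Matrix.mulVec_zero] at this
    exact this h2
  have hker : ∀ v : (Fin N × Fin N ⊕ Fin N) → ℂ, M *ᵥ v = 0 → v = 0 := by
    intro v hv
    set ty : Fin (N + 1) → ℂ := Fin.cases 0 (fun k => v (Sum.inr k)) with hty
    have key : ∀ (j : Fin N) (i : Fin (N + 1)),
        (∑ l, A i l * v (Sum.inl (j, l))) + A i j * ty i = 0 := by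
      intro j i
      have h := congrFun hv (j, i)
      rw [hMdef] at h
      simp only [Matrix.mulVec, dotProduct, Fintype.sum_sum_type,
        Matrix.fromCols, Matrix.of_apply, Sum.elim_inl, Sum.elim_inr,
        Pi.zero_apply] at h
      have h1 : (∑ p : Fin N × Fin N,
            ((1 : Matrix (Fin N) (Fin N) ℂ) ⊗ₖ A) (j, i) p * v (Sum.inl p))
          = ∑ l, A i l * v (Sum.inl (j, l)) := by
        rw [Fintype.sum_prod_type]
        simp [Matrix.kroneckerMap_apply, Matrix.one_apply, ite_mul,
          Finset.sum_ite_eq]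
      have h2 : (∑ k : Fin N, Dstack A (j, i) k.succ * v (Sum.inr k))
          = A i j * ty i := by
        induction i using Fin.cases with
        | zero =>
          have : ∀ k : Fin N, Dstack A (j, (0 : Fin (N+1))) k.succ = 0 := by
            intro k
            simp [Dstack, (Fin.succ_ne_zero k).symm]
          simp [this, hty]
        | succ m =>
          rw [Finset.sum_eq_single m]
          · simp [Dstack, hty]
          · intro k _ hk
            have : (Fin.succ m : Fin (N+1)) ≠ Fin.succ k := by
              simp [Fin.succ_inj]; exact fun h => hk h.symm
            simp [Dstack, this]
          · intro h; exact absurd (Finset.mem_univ m) h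
      rw [h1, h2] at h
      exact h
    -- eigenvector setup
    set X : Matrix (Fin N) (Fin N) ℂ := Matrix.of (fun l j => v (Sum.inl (j, l))) with hX
    set T : Module.End ℂ (Fin N → ℂ) := Matrix.mulVecLin Xᵀ with hT
    have hmem : ∀ i, A i ∈ Module.End.eigenspace T (-ty i) := by
      intro i
      rw [Module.End.mem_eigenspace_iff]
      funext j
      have hk := key j i
      simp only [hT, Matrix.mulVecLin_apply, Matrix.mulVec, dotProduct,
        Matrix.transpose_apply, Pi.smul_apply, smul_eq_mul, hX, Matrix.of_apply]
      have : ∑ l, v (Sum.inl (j, l)) * A i l = ∑ l, A i l * v (Sum.inl (j, l)) := by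
        exact Finset.sum_congr rfl (fun l _ => mul_comm _ _)
      rw [this]
      linear_combination hk
    have hty0 : ∀ i, ty i = 0 := by
      by_contra hcon
      push_neg at hcon
      obtain ⟨j0, hj0⟩ := hcon
      set S : Finset (Fin (N + 1)) := Finset.univ.filter (fun i => ty i = ty j0)
        with hS
      have hj0S : j0 ∈ S := by simp [hS]
      have h0S : (0 : Fin (N + 1)) ∉ S := by
        simp only [hS, Finset.mem_filter, Finset.mem_univ, true_and]
        have : ty 0 = 0 := by simp [hty]
        rw [this]
        exact fun h => hj0 h.symm
      have hScard : S.card ≤ N := by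
        have hsub : S ⊆ Finset.univ.erase 0 := fun i hi =>
          Finset.mem_erase.mpr ⟨fun h => h0S (h ▸ hi), Finset.mem_univ _⟩
        have := Finset.card_le_card hsub
        simpa [Finset.card_erase_of_mem] using this
      have hSccard : Sᶜ.card ≤ N := by
        have hj0c : j0 ∉ Sᶜ := by simp [Finset.mem_compl, hj0S]
        have hsub : Sᶜ ⊆ Finset.univ.erase j0 := fun i hi =>
          Finset.mem_erase.mpr ⟨fun h => hj0c (h ▸ hi), Finset.mem_univ _⟩
        have := Finset.card_le_card hsub
        simpa [Finset.card_erase_of_mem] using this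
      set E : Submodule ℂ (Fin N → ℂ) := Module.End.eigenspace T (-ty j0) with hE
      set F : Submodule ℂ (Fin N → ℂ) :=
        ⨆ (ν : ℂ) (_ : ν ≠ -ty j0), Module.End.eigenspace T ν with hF
      have hdisj : Disjoint E F := Module.End.eigenspaces_iSupIndep T (-ty j0)
      -- finrank E ≥ S.card
      have liS := rows_li_aux A hA S hScard
      have hspanE : span ℂ (Set.range fun i : S => A (i : Fin (N+1))) ≤ E := by
        rw [span_le]
        rintro _ ⟨i, rfl⟩
        have hi : ty (i : Fin (N+1)) = ty j0 := by
          have := i.2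
          simp only [hS, Finset.mem_filter, Finset.mem_univ, true_and] at this
          exact this
        have := hmem (i : Fin (N+1))
        rwa [hi] at this
      have hEcard : S.card ≤ finrank ℂ E := by
        have h1 := finrank_span_eq_card liS
        rw [Fintype.card_coe] at h1
        rw [← h1]
        exact Submodule.finrank_mono hspanE
      -- finrank F ≥ Sᶜ.card
      have liSc := rows_li_aux A hA Sᶜ hSccard
      have hspanF : span ℂ (Set.range fun i : (Sᶜ : Finset (Fin (N+1))) =>
          A (i : Fin (N+1))) ≤ F := by
        rw [span_le]
        rintro _ ⟨i, rfl⟩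
        have hi : ty (i : Fin (N+1)) ≠ ty j0 := by
          have := i.2
          simp only [Finset.mem_compl, hS, Finset.mem_filter, Finset.mem_univ,
            true_and] at this
          exact this
        have hne : -ty (i : Fin (N+1)) ≠ -ty j0 := fun h => hi (neg_injective h)
        have h1 : Module.End.eigenspace T (-ty (i : Fin (N+1))) ≤ F := by
          rw [hF]
          exact le_iSup₂ (f := fun ν (_ : ν ≠ -ty j0) => Module.End.eigenspace T ν)
            (-ty (i : Fin (N+1))) hne
        exact h1 (hmem (i : Fin (N+1)))
      have hFcard : Sᶜ.card ≤ finrank ℂ F := by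
        have h1 := finrank_span_eq_card liSc
        rw [Fintype.card_coe] at h1
        rw [← h1]
        exact Submodule.finrank_mono hspanF
      have hsumrank := Submodule.finrank_sup_add_finrank_inf_eq E F
      have hinf : E ⊓ F = ⊥ := hdisj.eq_bot
      rw [hinf, finrank_bot] at hsumrank
      have hEF : finrank ℂ (E ⊔ F : Submodule ℂ (Fin N → ℂ)) ≤ N := by
        have := Submodule.finrank_le (E ⊔ F : Submodule ℂ (Fin N → ℂ))
        simpa [Module.finrank_pi] using this
      have hcards : S.card + Sᶜ.card = N + 1 := by
        rw [Finset.card_add_card_compl]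
        simp
      omega
    -- conclude v = 0
    have hxz : ∀ j l, v (Sum.inl (j, l)) = 0 := by
      intro j l
      have hcol : A *ᵥ (fun l => v (Sum.inl (j, l))) = 0 := by
        funext i
        have hk := key j i
        rw [hty0 i] at hk
        simpa [Matrix.mulVec, dotProduct] using hk
      exact congrFun (hAinj _ hcol) l
    funext c
    match c with
    | Sum.inl (j, l) => exact hxz j l
    | Sum.inr k =>
      have := hty0 k.succ
      simpa [hty] using this
  -- rank computation
  have hkerbot : LinearMap.ker M.mulVecLin = ⊥ :=
    Matrix.ker_mulVecLin_eq_bot_iff.mpr hker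
  have hrk := LinearMap.finrank_range_add_finrank_ker M.mulVecLin
  rw [hkerbot, finrank_bot, add_zero] at hrk
  rw [Matrix.rank, hrk, Module.finrank_pi]
  simp [Fintype.card_sum, Fintype.card_prod]
  ring
end

section
/- Let U be an L×L DFT matrix with L prime, and let A be the L×Q submatrix obtained by deleting any L−Q columns, with Q < L. Then any Q rows of A are linearly independent; in particular, every (Q+1)×Q submatrix of A formed by any Q+1 rows has the property that each of its Q×Q submatrices obtained by deleting one row is invertible. -/
open Matrix

namespace Cheb

open Matrix Polynomial Finset Equiv

lemma strictMono_le {n : ℕ} {g : Fin n → ℕ} (hg : StrictMono g) (j : Fin n) : (j : ℕ) ≤ g j := by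
  obtain ⟨m, hm⟩ := j
  induction m with
  | zero => exact Nat.zero_le _
  | succ i ih =>
    have h1 : i < n := Nat.lt_of_succ_lt hm
    have h2 := hg (show (⟨i, h1⟩ : Fin n) < ⟨i+1, hm⟩ by simp [Fin.lt_def])
    have h3 := ih h1
    simp only [Fin.val_mk] at h2 h3 ⊢
    omega

lemma sum_fin_le {n : ℕ} {k : Fin n → ℕ} (hk : Function.Injective k) :
    ∑ i : Fin n, (i : ℕ) ≤ ∑ i, k i := by
  classical
  set s : Finset ℕ := Finset.image k Finset.univ with hs
  have hcard : s.card = n := by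
    rw [hs, Finset.card_image_of_injective _ hk, Finset.card_univ, Fintype.card_fin]
  have he : ∑ i, k i = ∑ x ∈ s, x := by
    rw [hs, Finset.sum_image (fun a _ b _ h => hk h)]
  let e := s.orderIsoOfFin hcard
  have hmono : StrictMono (fun j : Fin n => (e j : ℕ)) := fun a b hab => by
    exact_mod_cast (e.lt_iff_lt.mpr hab)
  have hsum2 : ∑ x ∈ s, x = ∑ j : Fin n, (e j : ℕ) := by
    rw [← Finset.sum_attach s (fun x => x)]
    exact (Fintype.sum_equiv e.toEquiv _ _ (fun j => rfl)).symm
  rw [he, hsum2]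
  exact Finset.sum_le_sum fun j _ => strictMono_le hmono j

lemma exists_perm {n : ℕ} {k : Fin n → ℕ} (hk : Function.Injective k)
    (hsum : ∑ i, k i = ∑ i : Fin n, (i : ℕ)) :
    ∃ τ : Equiv.Perm (Fin n), ∀ i, k i = τ i := by
  classical
  set s : Finset ℕ := Finset.image k Finset.univ with hs
  have hcard : s.card = n := by
    rw [hs, Finset.card_image_of_injective _ hk, Finset.card_univ, Fintype.card_fin]
  have he : ∑ i, k i = ∑ x ∈ s, x := by
    rw [hs, Finset.sum_image (fun a _ b _ h => hk h)]
  let e := s.orderIsoOfFin hcard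
  have hmono : StrictMono (fun j : Fin n => (e j : ℕ)) := fun a b hab => by
    exact_mod_cast (e.lt_iff_lt.mpr hab)
  have hsum2 : ∑ x ∈ s, x = ∑ j : Fin n, (e j : ℕ) := by
    rw [← Finset.sum_attach s (fun x => x)]
    exact (Fintype.sum_equiv e.toEquiv _ _ (fun j => rfl)).symm
  have heq : ∀ j : Fin n, (e j : ℕ) = (j : ℕ) := by
    have hle : ∀ j ∈ (Finset.univ : Finset (Fin n)), (j : ℕ) ≤ (e j : ℕ) :=
      fun j _ => strictMono_le hmono j
    have := (Finset.sum_eq_sum_iff_of_le hle).mp (by rw [← hsum2, ← he, hsum])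
    exact fun j => (this j (Finset.mem_univ j)).symm
  -- every value of k is < n
  have hlt : ∀ i, k i < n := by
    intro i
    have hmem : k i ∈ s := Finset.mem_image_of_mem k (Finset.mem_univ i)
    obtain ⟨j, hj⟩ := e.surjective ⟨k i, hmem⟩
    have : (e j : ℕ) = k i := by rw [hj]
    rw [heq j] at this
    omega
  let f : Fin n → Fin n := fun i => ⟨k i, hlt i⟩
  have hfinj : Function.Injective f := fun a b hab => hk (by
    simpa [f, Fin.ext_iff] using hab)
  have hbij : Function.Bijective f := Finite.injective_iff_bijective.mp hfinj
  exact ⟨Equiv.ofBijective f hbij, fun i => rfl⟩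


variable {n : ℕ} (a b : Fin n → ℕ)

/-- the big exponent -/
def N (σ : Equiv.Perm (Fin n)) : ℕ := ∑ i, a (σ i) * b i

/-- power sums -/
def S (m : ℕ) : ℤ := ∑ σ : Equiv.Perm (Fin n), (Equiv.Perm.sign σ : ℤ) * ((N a b σ : ℕ) : ℤ) ^ m

/-- D = 0 + 1 + ... + (n-1) -/
def Dd (n : ℕ) : ℕ := ∑ i : Fin n, (i : ℕ)

lemma S_expand (m : ℕ) :
    S a b m = ∑ k ∈ Finset.piAntidiag Finset.univ m,
      (Nat.multinomial Finset.univ k : ℤ) * (∏ i, (b i : ℤ) ^ k i) *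
        Matrix.det (Matrix.of fun p i => ((a p : ℤ)) ^ k i) := by
  classical
  have hpow : ∀ σ : Equiv.Perm (Fin n), ((N a b σ : ℕ) : ℤ) ^ m =
      ∑ k ∈ Finset.piAntidiag Finset.univ m,
        (Nat.multinomial Finset.univ k : ℤ) * ∏ i, ((a (σ i) : ℤ) * b i) ^ k i := by
    intro σ
    have : ((N a b σ : ℕ) : ℤ) = ∑ i, ((a (σ i) : ℤ) * b i) := by
      unfold N; push_cast; ring
    rw [this, Finset.sum_pow_eq_sum_piAntidiag]
  unfold S
  simp_rw [hpow, Finset.mul_sum]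
  rw [Finset.sum_comm]
  refine Finset.sum_congr rfl fun k hk => ?_
  rw [Matrix.det_apply', Finset.mul_sum]
  refine Finset.sum_congr rfl fun σ _ => ?_
  simp only [Matrix.of_apply, mul_pow]
  rw [Finset.prod_mul_distrib]
  push_cast
  ring

lemma det_zero_of_not_inj {k : Fin n → ℕ} (h : ¬ Function.Injective k) :
    Matrix.det (Matrix.of fun p i => ((a p : ℤ)) ^ k i) = 0 := by
  classical
  simp only [Function.Injective, not_forall] at h
  obtain ⟨i, j, hk, hij⟩ := h
  exact Matrix.det_zero_of_column_eq hij (fun p => by simp [hk])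

lemma S_vanish {m : ℕ} (hm : m < Dd n) : S a b m = 0 := by
  classical
  rw [S_expand]
  refine Finset.sum_eq_zero fun k hk => ?_
  rw [Finset.mem_piAntidiag] at hk
  have : ¬ Function.Injective k := by
    intro hinj
    have := sum_fin_le hinj
    rw [hk.1] at this
    exact absurd (lt_of_le_of_lt this hm) (lt_irrefl _)
  rw [det_zero_of_not_inj a this, mul_zero]

lemma S_top : S a b (Dd n) =
    (Nat.multinomial Finset.univ (fun i : Fin n => (i : ℕ)) : ℤ) *
      (Matrix.det (Matrix.vandermonde fun i => (a i : ℤ)) *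
        Matrix.det (Matrix.vandermonde fun i => (b i : ℤ))) := by
  classical
  rw [S_expand]
  set F : (Fin n → ℕ) → ℤ := fun k =>
    (Nat.multinomial Finset.univ k : ℤ) * (∏ i, (b i : ℤ) ^ k i) *
      Matrix.det (Matrix.of fun p i => ((a p : ℤ)) ^ k i) with hF
  set ι : Equiv.Perm (Fin n) → (Fin n → ℕ) := fun τ => fun i => (τ i : ℕ) with hι
  have hιinj : Function.Injective ι := fun τ τ' h =>
    Equiv.ext fun i => Fin.val_injective (congrFun h i)
  have hsub : (Finset.univ : Finset (Equiv.Perm (Fin n))).image ι ⊆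
      Finset.piAntidiag Finset.univ (Dd n) := by
    intro k hk
    obtain ⟨τ, _, rfl⟩ := Finset.mem_image.mp hk
    rw [Finset.mem_piAntidiag]
    refine ⟨?_, fun i _ => Finset.mem_univ i⟩
    exact Equiv.sum_comp τ (fun i => (i : ℕ))
  have hzero : ∀ k ∈ Finset.piAntidiag Finset.univ (Dd n),
      k ∉ (Finset.univ : Finset (Equiv.Perm (Fin n))).image ι → F k = 0 := by
    intro k hk hnk
    rw [Finset.mem_piAntidiag] at hk
    have hni : ¬ Function.Injective k := by
      intro hinj
      obtain ⟨τ, hτ⟩ := exists_perm hinj hk.1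
      exact hnk (Finset.mem_image.mpr ⟨τ, Finset.mem_univ _, by ext i; exact (hτ i).symm⟩)
    rw [hF]
    simp only
    rw [det_zero_of_not_inj a hni, mul_zero]
  rw [← Finset.sum_subset hsub (fun k hk hnk => hzero k hk hnk)]
  rw [Finset.sum_image (fun τ _ τ' _ h => hιinj h)]
  -- now compute each term
  have hmult : ∀ τ : Equiv.Perm (Fin n),
      Nat.multinomial Finset.univ (ι τ) = Nat.multinomial Finset.univ (fun i : Fin n => (i : ℕ)) := by
    intro τ
    have h1 := Nat.multinomial_spec (Finset.univ : Finset (Fin n)) (ι τ)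
    have h2 := Nat.multinomial_spec (Finset.univ : Finset (Fin n)) (fun i : Fin n => (i : ℕ))
    have hprod : (∏ i, Nat.factorial ((ι τ) i)) = ∏ i : Fin n, Nat.factorial (i : ℕ) :=
      Equiv.prod_comp τ (fun i : Fin n => Nat.factorial (i : ℕ))
    have hsum : (∑ i, (ι τ) i) = ∑ i : Fin n, (i : ℕ) := Equiv.sum_comp τ (fun i => (i : ℕ))
    have hpos : 0 < ∏ i : Fin n, Nat.factorial (i : ℕ) := Finset.prod_pos fun i _ => Nat.factorial_pos _
    rw [hprod, hsum] at h1
    rw [← h2] at h1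
    exact Nat.eq_of_mul_eq_mul_left hpos h1
  have hdet : ∀ τ : Equiv.Perm (Fin n),
      Matrix.det (Matrix.of fun p i => ((a p : ℤ)) ^ (ι τ) i) =
        (Equiv.Perm.sign τ : ℤ) * Matrix.det (Matrix.vandermonde fun i => (a i : ℤ)) := by
    intro τ
    have : (Matrix.of fun p i => ((a p : ℤ)) ^ (ι τ) i) =
        (Matrix.vandermonde fun i => (a i : ℤ)).submatrix id τ := by
      ext p i
      simp [Matrix.vandermonde, ι]
    rw [this, Matrix.det_permute']
    norm_cast
  simp_rw [hF, hmult, hdet]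
  -- Σ_τ sign τ * ∏ b i ^ τ i = det vandermonde b
  have hb : ∑ τ : Equiv.Perm (Fin n), (Equiv.Perm.sign τ : ℤ) * ∏ i, (b i : ℤ) ^ (ι τ) i =
      Matrix.det (Matrix.vandermonde fun i => (b i : ℤ)) := by
    rw [Matrix.det_apply']
    rw [← Equiv.sum_comp (Equiv.inv (Equiv.Perm (Fin n)))
        (fun σ => ((Equiv.Perm.sign σ : ℤ)) * ∏ i, (b i : ℤ) ^ (ι σ) i)]
    refine Finset.sum_congr rfl fun τ _ => ?_
    simp only [Equiv.inv_apply]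
    congr 1
    · simp
    · refine (Fintype.prod_equiv τ (fun i => Matrix.vandermonde (fun j => (b j : ℤ)) (τ i) i)
        (fun x => (b x : ℤ) ^ (ι τ⁻¹) x) (fun x => ?_)).symm
      simp [Matrix.vandermonde, ι]
  rw [← hb, Finset.mul_sum, Finset.mul_sum]
  refine Finset.sum_congr rfl fun τ _ => ?_
  ring

/-- The determinant polynomial. -/
noncomputable def Ap : Polynomial ℤ :=
  Matrix.det (Matrix.of fun p i : Fin n => (Polynomial.X : Polynomial ℤ) ^ (a p * b i))

/-- Its shift by one. -/
noncomputable def Cp : Polynomial ℤ := (Ap a b).comp (Polynomial.X + 1)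

lemma Ap_eq : Ap a b = ∑ σ : Equiv.Perm (Fin n),
    (Equiv.Perm.sign σ : ℤ) • (Polynomial.X : Polynomial ℤ) ^ (N a b σ) := by
  unfold Ap
  rw [Matrix.det_apply]
  refine Finset.sum_congr rfl fun σ _ => ?_
  congr 1
  unfold N
  rw [← Finset.prod_pow_eq_pow_sum]
  rfl

lemma Cp_coeff (m : ℕ) : (Cp a b).coeff m =
    ∑ σ : Equiv.Perm (Fin n), (Equiv.Perm.sign σ : ℤ) * ((N a b σ).choose m : ℤ) := by
  unfold Cp
  rw [Ap_eq]
  have h : (∑ σ : Equiv.Perm (Fin n),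
      (Equiv.Perm.sign σ : ℤ) • (Polynomial.X : Polynomial ℤ) ^ (N a b σ)).comp
        (Polynomial.X + 1) =
      ∑ σ : Equiv.Perm (Fin n),
        ((Equiv.Perm.sign σ : ℤ) : Polynomial ℤ) * (Polynomial.X + 1 : Polynomial ℤ) ^ (N a b σ) := by
    simp [zsmul_eq_mul, Polynomial.mul_comp, Polynomial.pow_comp]
  rw [h, Polynomial.finset_sum_coeff]
  refine Finset.sum_congr rfl fun σ _ => ?_
  rw [Polynomial.coeff_intCast_mul, Polynomial.coeff_X_add_one_pow]
  norm_cast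

lemma factorial_mul_Cp_coeff (m : ℕ) :
    (m.factorial : ℤ) * (Cp a b).coeff m =
      ∑ j ∈ Finset.range (m + 1), (descPochhammer ℤ m).coeff j * S a b j := by
  have h1 : ∀ σ : Equiv.Perm (Fin n),
      (m.factorial : ℤ) * ((Equiv.Perm.sign σ : ℤ) * ((N a b σ).choose m : ℤ)) =
      ∑ j ∈ Finset.range (m + 1),
        (descPochhammer ℤ m).coeff j *
          ((Equiv.Perm.sign σ : ℤ) * (((N a b σ : ℕ)) : ℤ) ^ j) := by
    intro σ
    have h2 : (descPochhammer ℤ m).eval (((N a b σ : ℕ)) : ℤ) =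
        ((N a b σ).descFactorial m : ℤ) := descPochhammer_eval_eq_descFactorial ℤ _ _
    have hdeg : (descPochhammer ℤ m).natDegree < m + 1 := by
      rw [descPochhammer_natDegree]; exact Nat.lt_succ_self m
    have h3 : (descPochhammer ℤ m).eval (((N a b σ : ℕ)) : ℤ) =
        ∑ j ∈ Finset.range (m + 1),
          (descPochhammer ℤ m).coeff j * (((N a b σ : ℕ)) : ℤ) ^ j :=
      Polynomial.eval_eq_sum_range' hdeg _
    calc (m.factorial : ℤ) * ((Equiv.Perm.sign σ : ℤ) * ((N a b σ).choose m : ℤ))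
        = (Equiv.Perm.sign σ : ℤ) * ((m.factorial * (N a b σ).choose m : ℕ) : ℤ) := by
          push_cast; ring
      _ = (Equiv.Perm.sign σ : ℤ) * (((N a b σ).descFactorial m : ℕ) : ℤ) := by
          rw [← Nat.descFactorial_eq_factorial_mul_choose]
      _ = (Equiv.Perm.sign σ : ℤ) * (descPochhammer ℤ m).eval (((N a b σ : ℕ)) : ℤ) := by
          rw [h2]
      _ = _ := by
          rw [h3, Finset.mul_sum]
          exact Finset.sum_congr rfl fun j _ => by ring
  rw [Cp_coeff, Finset.mul_sum]
  calc ∑ σ : Equiv.Perm (Fin n),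
        (m.factorial : ℤ) * ((Equiv.Perm.sign σ : ℤ) * ((N a b σ).choose m : ℤ))
      = ∑ σ : Equiv.Perm (Fin n), ∑ j ∈ Finset.range (m + 1),
          (descPochhammer ℤ m).coeff j *
            ((Equiv.Perm.sign σ : ℤ) * (((N a b σ : ℕ)) : ℤ) ^ j) :=
        Finset.sum_congr rfl fun σ _ => h1 σ
    _ = ∑ j ∈ Finset.range (m + 1), ∑ σ : Equiv.Perm (Fin n),
          (descPochhammer ℤ m).coeff j *
            ((Equiv.Perm.sign σ : ℤ) * (((N a b σ : ℕ)) : ℤ) ^ j) := Finset.sum_comm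
    _ = _ := by
        refine Finset.sum_congr rfl fun j _ => ?_
        rw [S, Finset.mul_sum]

lemma Cp_coeff_lt {m : ℕ} (hm : m < Dd n) : (Cp a b).coeff m = 0 := by
  have h := factorial_mul_Cp_coeff a b m
  have hz : ∑ j ∈ Finset.range (m + 1), (descPochhammer ℤ m).coeff j * S a b j = 0 := by
    refine Finset.sum_eq_zero fun j hj => ?_
    rw [Finset.mem_range] at hj
    have hjD : j < Dd n := by omega
    rw [S_vanish a b hjD, mul_zero]
  rw [hz] at h
  have hfac : ((m.factorial : ℤ)) ≠ 0 := by
    exact_mod_cast Nat.factorial_ne_zero m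
  exact (mul_eq_zero.mp h).resolve_left hfac

lemma prod_factorial_mul_Cp_coeff :
    (∏ i : Fin n, (Nat.factorial (i : ℕ) : ℤ)) * (Cp a b).coeff (Dd n) =
      Matrix.det (Matrix.vandermonde fun i => (a i : ℤ)) *
        Matrix.det (Matrix.vandermonde fun i => (b i : ℤ)) := by
  have h := factorial_mul_Cp_coeff a b (Dd n)
  rw [Finset.sum_range_succ] at h
  have hz : ∑ j ∈ Finset.range (Dd n), (descPochhammer ℤ (Dd n)).coeff j * S a b j = 0 :=
    Finset.sum_eq_zero fun j hj => by
      rw [S_vanish a b (Finset.mem_range.mp hj), mul_zero]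
  have hmon : (descPochhammer ℤ (Dd n)).coeff (Dd n) = 1 := by
    have := monic_descPochhammer ℤ (Dd n)
    rw [Polynomial.Monic, Polynomial.leadingCoeff, descPochhammer_natDegree] at this
    exact this
  rw [hz, hmon, zero_add, one_mul, S_top] at h
  have hspec := Nat.multinomial_spec (Finset.univ : Finset (Fin n)) (fun i : Fin n => (i : ℕ))
  have hfacD : ((Dd n).factorial : ℤ) ≠ 0 := by exact_mod_cast Nat.factorial_ne_zero _
  refine mul_left_cancel₀ hfacD ?_
  calc ((Dd n).factorial : ℤ) * ((∏ i : Fin n, (Nat.factorial (i : ℕ) : ℤ)) * (Cp a b).coeff (Dd n))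
      = (∏ i : Fin n, (Nat.factorial (i : ℕ) : ℤ)) * (((Dd n).factorial : ℤ) * (Cp a b).coeff (Dd n)) := by
        ring
    _ = (∏ i : Fin n, (Nat.factorial (i : ℕ) : ℤ)) *
          ((Nat.multinomial Finset.univ (fun i : Fin n => (i : ℕ)) : ℤ) *
            (Matrix.det (Matrix.vandermonde fun i => (a i : ℤ)) *
              Matrix.det (Matrix.vandermonde fun i => (b i : ℤ)))) := by rw [h]
    _ = (((∏ i : Fin n, Nat.factorial (i : ℕ)) *
            Nat.multinomial Finset.univ (fun i : Fin n => (i : ℕ)) : ℕ) : ℤ) *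
          (Matrix.det (Matrix.vandermonde fun i => (a i : ℤ)) *
            Matrix.det (Matrix.vandermonde fun i => (b i : ℤ))) := by push_cast; ring
    _ = _ := by rw [hspec]; rfl

/-- Chebotarev's theorem: minors of the DFT matrix at a primitive `p`-th root of unity
are nonzero. -/
lemma det_ne_zero {p nn : ℕ} (hp : p.Prime) (hn : nn < p) (a b : Fin nn → ℕ)
    (ha : ∀ i, a i < p) (hb : ∀ i, b i < p)
    (hainj : Function.Injective a) (hbinj : Function.Injective b)
    {ζ : ℂ} (hζ : IsPrimitiveRoot ζ p) :
    Matrix.det (Matrix.of fun i j : Fin nn => ζ ^ (a i * b j)) ≠ 0 := by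
  haveI : Fact p.Prime := ⟨hp⟩
  intro h0
  -- the polynomial vanishes at ζ
  have hev : Polynomial.aeval ζ (Ap a b) = 0 := by
    unfold Ap
    rw [AlgHom.map_det (Polynomial.aeval ζ)]
    rw [← h0]
    congr 1
    ext i j
    simp
  -- hence the rational cyclotomic polynomial divides the rational image
  have hdvdQ : Polynomial.cyclotomic p ℚ ∣ (Ap a b).map (Int.castRingHom ℚ) := by
    rw [Polynomial.cyclotomic_eq_minpoly_rat hζ hp.pos]
    apply minpoly.dvd
    rw [show (Int.castRingHom ℚ) = algebraMap ℤ ℚ from rfl,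
      Polynomial.aeval_map_algebraMap]
    exact hev
  have hdvdZ : Polynomial.cyclotomic p ℤ ∣ Ap a b :=
    (Polynomial.map_dvd_map (Int.castRingHom ℚ) Int.cast_injective
      (Polynomial.cyclotomic.monic p ℤ)).mp (by rwa [Polynomial.map_cyclotomic_int])
  -- write Cp = X^D * C1
  have hXdvd : (Polynomial.X : Polynomial ℤ) ^ (Dd nn) ∣ Cp a b :=
    Polynomial.X_pow_dvd_iff.mpr fun d hd => Cp_coeff_lt a b hd
  obtain ⟨C1, hC1⟩ := hXdvd
  -- recover Ap from Cp
  have hApC : Ap a b = (Cp a b).comp (Polynomial.X - 1) := by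
    unfold Cp
    rw [Polynomial.comp_assoc]
    simp
  have hAfact : Ap a b = (Polynomial.X - 1) ^ (Dd nn) * C1.comp (Polynomial.X - 1) := by
    rw [hApC, hC1, Polynomial.mul_comp, Polynomial.pow_comp, Polynomial.X_comp]
  -- prime divisibility over ℚ
  have hirr : Irreducible (Polynomial.cyclotomic p ℚ) :=
    Polynomial.cyclotomic.irreducible_rat hp.pos
  have hprime : Prime (Polynomial.cyclotomic p ℚ) :=
    UniqueFactorizationMonoid.irreducible_iff_prime.mp hirr
  have hdvd2 : Polynomial.cyclotomic p ℚ ∣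
      ((Polynomial.X - 1 : Polynomial ℚ)) ^ (Dd nn) *
        (C1.comp (Polynomial.X - 1)).map (Int.castRingHom ℚ) := by
    have := hdvdQ
    rw [hAfact] at this
    simpa using this
  have hnd : ¬ Polynomial.cyclotomic p ℚ ∣ ((Polynomial.X - 1 : Polynomial ℚ)) ^ (Dd nn) := by
    intro hdd
    by_cases hD : Dd nn = 0
    · rw [hD, pow_zero] at hdd
      exact hirr.not_isUnit (isUnit_of_dvd_one hdd)
    · have h1 : Polynomial.cyclotomic p ℚ ∣ (Polynomial.X - 1 : Polynomial ℚ) :=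
        hprime.dvd_of_dvd_pow hdd
      have hXne : (Polynomial.X - 1 : Polynomial ℚ) ≠ 0 := Polynomial.X_sub_C_ne_zero 1
      have hdeg := Polynomial.degree_le_of_dvd h1 hXne
      rw [Polynomial.degree_cyclotomic] at hdeg
      have hdegX : (Polynomial.X - 1 : Polynomial ℚ).degree = 1 := Polynomial.degree_X_sub_C 1
      rw [hdegX] at hdeg
      have htot : p.totient = p - 1 := Nat.totient_prime hp
      rw [htot] at hdeg
      have hple : p - 1 ≤ 1 := by exact_mod_cast hdeg
      have hp2 : p = 2 := by have := hp.two_le; omega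
      -- then nn ≤ 1 so Dd nn = 0
      have hnn : nn ≤ 1 := by omega
      apply hD
      interval_cases nn
      · simp [Dd]
      · simp [Dd]
  have hdvdC1 : Polynomial.cyclotomic p ℚ ∣ (C1.comp (Polynomial.X - 1)).map (Int.castRingHom ℚ) :=
    (hprime.dvd_or_dvd hdvd2).resolve_left hnd
  have hdvdC1Z : Polynomial.cyclotomic p ℤ ∣ C1.comp (Polynomial.X - 1) :=
    (Polynomial.map_dvd_map (Int.castRingHom ℚ) Int.cast_injective
      (Polynomial.cyclotomic.monic p ℤ)).mp (by rwa [Polynomial.map_cyclotomic_int])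
  -- p divides the key coefficient
  have hpdvd : (p : ℤ) ∣ (Cp a b).coeff (Dd nn) := by
    obtain ⟨g, hg⟩ := hdvdC1Z
    have heval : (C1.comp (Polynomial.X - 1)).eval 1 = (Cp a b).coeff (Dd nn) := by
      rw [Polynomial.eval_comp]
      simp only [Polynomial.eval_sub, Polynomial.eval_X, Polynomial.eval_one, sub_self]
      rw [← Polynomial.coeff_zero_eq_eval_zero, hC1]
      have hx := Polynomial.coeff_X_pow_mul C1 (Dd nn) 0
      simpa using hx.symm
    rw [← heval, hg, Polynomial.eval_mul, Polynomial.eval_one_cyclotomic_prime]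
    exact Dvd.intro _ rfl
  -- p divides the Vandermonde product
  have hVV := prod_factorial_mul_Cp_coeff a b
  have hpVV : (p : ℤ) ∣ Matrix.det (Matrix.vandermonde fun i => (a i : ℤ)) *
      Matrix.det (Matrix.vandermonde fun i => (b i : ℤ)) := by
    rw [← hVV]
    exact Dvd.dvd.mul_left hpdvd _
  have hpZ : Prime (p : ℤ) := Nat.prime_iff_prime_int.mp hp
  -- a Vandermonde determinant of distinct residues is not divisible by p
  have hvdm : ∀ (c : Fin nn → ℕ), (∀ i, c i < p) → Function.Injective c →
      ¬ (p : ℤ) ∣ Matrix.det (Matrix.vandermonde fun i => (c i : ℤ)) := by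
    intro c hcl hcinj hdd
    rw [Matrix.det_vandermonde] at hdd
    obtain ⟨i, _, hdd2⟩ := (Prime.dvd_finset_prod_iff hpZ _).mp hdd
    obtain ⟨j, hj, hdd3⟩ := (Prime.dvd_finset_prod_iff hpZ _).mp hdd2
    have hij : i ≠ j := fun h => by subst h; exact absurd hj (by simp)
    have hne : ((c j : ℤ) - (c i : ℤ)) ≠ 0 := by
      intro h
      apply hij
      apply hcinj
      have h5 : (c i : ℤ) = (c j : ℤ) := by omega
      exact_mod_cast h5
    have habs : ((c j : ℤ) - (c i : ℤ)).natAbs < (p : ℤ).natAbs := by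
      have h1 := hcl i; have h2 := hcl j
      simp only [Int.natAbs_natCast]
      omega
    exact hne (Int.eq_zero_of_dvd_of_natAbs_lt_natAbs hdd3 habs)
  rcases hpZ.dvd_or_dvd hpVV with h | h
  · exact hvdm a ha hainj h
  · exact hvdm b hb hbinj h

end Cheb

/-- Chebotarev-type property: for `L` prime, deleting any `L−Q` columns of the `L×L`
DFT matrix leaves an `L×Q` matrix any `Q` rows of which are linearly independent; in
particular, every `(Q+1)×Q` submatrix formed by any `Q+1` rows has all its `Q×Q`
row-deleted submatrices invertible. -/
theorem stmt10 (L Q : ℕ) (hL : Nat.Prime L) (hQ : Q < L)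
    (col : Fin Q → Fin L) (hcol : Function.Injective col) :
    letI U : Matrix (Fin L) (Fin L) ℂ := fun j k =>
      Complex.exp (-(2 * Real.pi * Complex.I * (j : ℕ) * (k : ℕ)) / (L : ℕ)) /
        (Real.sqrt L : ℂ)
    (∀ row : Fin Q → Fin L, Function.Injective row →
        IsUnit (U.submatrix row col)) ∧
      (∀ row : Fin (Q + 1) → Fin L, Function.Injective row →
        ∀ i : Fin (Q + 1), IsUnit ((U.submatrix row col).submatrix i.succAbove id)) := by
  set U : Matrix (Fin L) (Fin L) ℂ := fun j k =>
    Complex.exp (-(2 * Real.pi * Complex.I * (j : ℕ) * (k : ℕ)) / (L : ℕ)) /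
      (Real.sqrt L : ℂ) with hU
  have hL0 : 0 < L := hL.pos
  set ζ : ℂ := Complex.exp (-(2 * Real.pi * Complex.I) / (L : ℕ)) with hζdef
  have hζ : IsPrimitiveRoot ζ L := by
    have h1 : IsPrimitiveRoot (Complex.exp (2 * Real.pi * Complex.I / (L : ℕ))) L :=
      Complex.isPrimitiveRoot_exp L hL0.ne'
    have h2 : ζ = (Complex.exp (2 * Real.pi * Complex.I / (L : ℕ)))⁻¹ := by
      rw [← Complex.exp_neg, hζdef, neg_div]
    rw [h2]
    exact h1.inv
  have hsqrt : ((Real.sqrt L : ℂ)) ≠ 0 := by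
    have : (0 : ℝ) < Real.sqrt L := Real.sqrt_pos.mpr (by exact_mod_cast hL0)
    exact_mod_cast this.ne'
  have key : ∀ row : Fin Q → Fin L, Function.Injective row →
      IsUnit (U.submatrix row col) := by
    intro row hrow
    have hM : U.submatrix row col =
        ((Real.sqrt L : ℂ))⁻¹ • Matrix.of (fun i j : Fin Q => ζ ^ ((row i : ℕ) * (col j : ℕ))) := by
      ext i j
      have hexp : Complex.exp (-(2 * Real.pi * Complex.I * ((row i : ℕ) : ℂ) * ((col j : ℕ) : ℂ)) / (L : ℕ)) =
          ζ ^ ((row i : ℕ) * (col j : ℕ)) := by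
        rw [hζdef, ← Complex.exp_nat_mul]
        congr 1
        push_cast
        ring
      simp only [hU, Matrix.submatrix_apply, Matrix.smul_apply, Matrix.of_apply, smul_eq_mul]
      show Complex.exp _ / _ = _
      rw [hexp, div_eq_mul_inv, mul_comm]
    rw [hM, Matrix.isUnit_iff_isUnit_det, Matrix.det_smul, isUnit_iff_ne_zero]
    apply mul_ne_zero
    · exact pow_ne_zero _ (inv_ne_zero hsqrt)
    · exact Cheb.det_ne_zero hL hQ (fun i => (row i : ℕ)) (fun j => (col j : ℕ))
        (fun i => (row i).isLt) (fun j => (col j).isLt)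
        (fun x y h => hrow (Fin.val_injective h)) (fun x y h => hcol (Fin.val_injective h)) hζ
  refine ⟨key, ?_⟩
  intro row hrow i
  have h2 : (U.submatrix row col).submatrix i.succAbove id =
      U.submatrix (row ∘ i.succAbove) col := by
    rw [Matrix.submatrix_submatrix]
    rfl
  rw [h2]
  exact key (row ∘ i.succAbove) (hrow.comp (Fin.succAbove_right_injective))
end
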